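/- Let ‖·‖ be a URTC-norm on ℝ², let d > 0, and let b₁, b₂ ∈ ℝ² satisfy ‖b₁‖ = ‖b₂‖ = ‖b₁ − b₂‖ = d. If (0, b₁, b₂, b₃, c₁, c₂, c₃) is a d-probe, then necessarily b₃ = b₁ + b₂; in particular b₃ ≠ 0. -/

import Mathlib

/-- `N` is a norm on `ℝ²`. -/
structure IsNorm (N : ℝ × ℝ → ℝ) : Prop where
  add_le : ∀ x y : ℝ × ℝ, N (x + y) ≤ N x + N y
  smul_eq : ∀ (c : ℝ) (x : ℝ × ℝ), N (c • x) = |c| * N x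
  eq_zero_of : ∀ x : ℝ × ℝ, N x = 0 → x = 0

/-- `N` is a URTC-norm: for every `a b` at `N`-distance `1`, there are exactly two
points `x` with `N (a - x) = 1` and `N (b - x) = 1`. -/
def IsURTC (N : ℝ × ℝ → ℝ) : Prop :=
  ∀ a b : ℝ × ℝ, N (a - b) = 1 →
    {x : ℝ × ℝ | N (a - x) = 1 ∧ N (b - x) = 1}.encard = 2

/-- A `d`-probe: a 7-tuple of points with the eleven prescribed pairwise distances
all equal to `d`. -/
def IsProbe (N : ℝ × ℝ → ℝ) (d : ℝ) (a b₁ b₂ b₃ c₁ c₂ c₃ : ℝ × ℝ) : Prop :=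
  N (a - b₁) = d ∧ N (a - b₂) = d ∧ N (b₁ - b₂) = d ∧ N (b₁ - b₃) = d ∧
  N (b₂ - b₃) = d ∧ N (a - c₁) = d ∧ N (a - c₂) = d ∧ N (c₁ - c₂) = d ∧
  N (c₁ - c₃) = d ∧ N (c₂ - c₃) = d ∧ N (b₃ - c₃) = d

/-!
In a URTC-norm two points at distance `d` have exactly two common `d`-neighbours, and if
`p, q, r` is an equilateral triangle of side `d` these are `r` and its reflection `p + q - r`.
Applied to the triangle `0, b₁, b₂` this gives `b₃ ∈ {0, b₁ + b₂}`. If `b₃ = 0`, the same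
argument for `0, c₁, c₂` forces `c₃ = c₁ + c₂` (as `‖c₃‖ = ‖b₃ - c₃‖ = d ≠ 0`), so
`‖c₁ + c₂‖ = d`. But then `c₁ + c₂` is a common neighbour of `0` and `c₁`, whose common
neighbours are `c₂` and `c₁ - c₂`; either way `c₁ = 0` or `c₂ = 0`, which is absurd.
-/

open Pointwise

namespace IsNorm

variable {N : ℝ × ℝ → ℝ}

lemma map_zero (hN : IsNorm N) : N 0 = 0 := by
  simpa using hN.smul_eq 0 0

lemma map_neg (hN : IsNorm N) (x : ℝ × ℝ) : N (-x) = N x := by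
  simpa using hN.smul_eq (-1) x

lemma map_sub_comm (hN : IsNorm N) (x y : ℝ × ℝ) : N (x - y) = N (y - x) := by
  rw [← neg_sub, hN.map_neg]

end IsNorm

def commonNeighbors (N : ℝ × ℝ → ℝ) (d : ℝ) (p q : ℝ × ℝ) : Set (ℝ × ℝ) :=
  {x | N (p - x) = d ∧ N (q - x) = d}

section

variable {N : ℝ × ℝ → ℝ} {d : ℝ}

lemma commonNeighbors_smul (hN : IsNorm N) (hd : 0 < d) (a b : ℝ × ℝ) :
    commonNeighbors N d (d • a) (d • b) = d • commonNeighbors N 1 a b := by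
  ext x
  have key (c : ℝ × ℝ) : N (d • c - x) = d * N (c - d⁻¹ • x) := by
    rw [← abs_of_pos hd, ← hN.smul_eq, smul_sub, abs_of_pos hd, smul_inv_smul₀ hd.ne']
  simp only [Set.mem_smul_set_iff_inv_smul_mem₀ hd.ne', commonNeighbors, Set.mem_ofPred_eq, key,
    mul_eq_left₀ hd.ne']

lemma IsURTC.encard_commonNeighbors (hU : IsURTC N) (hN : IsNorm N) (hd : 0 < d)
    {p q : ℝ × ℝ} (hpq : N (p - q) = d) : (commonNeighbors N d p q).encard = 2 := by
  obtain ⟨a, rfl⟩ : ∃ a, d • a = p := ⟨d⁻¹ • p, smul_inv_smul₀ hd.ne' p⟩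
  obtain ⟨b, rfl⟩ : ∃ b, d • b = q := ⟨d⁻¹ • q, smul_inv_smul₀ hd.ne' q⟩
  have hab : N (a - b) = 1 := by
    rwa [← smul_sub, hN.smul_eq, abs_of_pos hd, mul_eq_left₀ hd.ne'] at hpq
  rw [commonNeighbors_smul hN hd, ← Units.smul_mk0 hd.ne', Set.encard_smul_set]
  exact hU a b hab

lemma IsURTC.commonNeighbors_eq_pair (hU : IsURTC N) (hN : IsNorm N) (hd : 0 < d)
    {p q r : ℝ × ℝ} (hpq : N (p - q) = d) (hrp : N (r - p) = d) (hrq : N (r - q) = d) :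
    commonNeighbors N d p q = {r, p + q - r} := by
  have hne : r ≠ p + q - r := by
    intro h
    have : p - q = (2 : ℝ) • (r - q) := by
      rw [two_smul]; nth_rewrite 2 [h]; abel
    rw [this, hN.smul_eq, hrq] at hpq
    norm_num at hpq
    linarith
  symm
  refine Set.Finite.eq_of_subset_of_encard_le (Set.toFinite _) ?_ ?_
  · rintro x (rfl | rfl)
    · exact ⟨by rwa [hN.map_sub_comm], by rwa [hN.map_sub_comm]⟩
    · refine ⟨?_, ?_⟩
      · rw [show p - (p + q - r) = r - q by abel, hrq]
      · rw [show q - (p + q - r) = r - p by abel, hrp]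
  · rw [hU.encard_commonNeighbors hN hd hpq, Set.encard_pair hne]

lemma IsURTC.map_add_ne (hU : IsURTC N) (hN : IsNorm N) (hd : 0 < d) {p q : ℝ × ℝ}
    (hp : N p = d) (hq : N q = d) (hpq : N (p - q) = d) : N (p + q) ≠ d := by
  intro hsum
  have hmem : p + q ∈ commonNeighbors N d 0 p :=
    ⟨by rwa [zero_sub, hN.map_neg], by rwa [show p - (p + q) = -q by abel, hN.map_neg]⟩
  rw [hU.commonNeighbors_eq_pair (r := q) hN hd (by rwa [zero_sub, hN.map_neg])
    (by rwa [sub_zero]) (by rwa [hN.map_sub_comm])] at hmem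
  simp only [Set.mem_insert_iff, Set.mem_singleton_iff, zero_add] at hmem
  rcases hmem with h | h
  · rw [add_eq_right.mp h, hN.map_zero] at hp
    exact hd.ne hp
  · have : q = 0 := by rwa [sub_eq_add_neg, add_right_inj, self_eq_neg] at h
    rw [this, hN.map_zero] at hq
    exact hd.ne hq

end

theorem probe_fourth_point_general (N : ℝ × ℝ → ℝ) (hN : IsNorm N) (hU : IsURTC N)
    (d : ℝ) (hd : 0 < d) (b₁ b₂ b₃ c₁ c₂ c₃ : ℝ × ℝ)
    (hp : IsProbe N d 0 b₁ b₂ b₃ c₁ c₂ c₃) :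
    b₃ = b₁ + b₂ ∧ b₃ ≠ 0 := by
  obtain ⟨hb₁, hb₂, hb₁₂, hb₁₃, hb₂₃, hc₁, hc₂, hc₁₂, hc₁₃, hc₂₃, hbc₃⟩ := hp
  have hb₃ : b₃ ∈ ({0, b₁ + b₂ - 0} : Set (ℝ × ℝ)) := by
    rw [← hU.commonNeighbors_eq_pair hN hd hb₁₂ hb₁ hb₂]
    exact ⟨hb₁₃, hb₂₃⟩
  have hb₃_ne : b₃ ≠ 0 := by
    rintro rfl
    have hc₃ : c₃ ∈ ({0, c₁ + c₂ - 0} : Set (ℝ × ℝ)) := by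
      rw [← hU.commonNeighbors_eq_pair hN hd hc₁₂ hc₁ hc₂]
      exact ⟨hc₁₃, hc₂₃⟩
    rcases hc₃ with rfl | rfl
    · rw [sub_zero, hN.map_zero] at hbc₃
      exact hd.ne hbc₃
    · simp only [zero_sub, sub_zero, hN.map_neg] at hc₁ hc₂ hbc₃
      exact hU.map_add_ne hN hd hc₁ hc₂ hc₁₂ hbc₃
  rcases hb₃ with rfl | rfl
  · exact absurd rfl hb₃_ne
  · exact ⟨sub_zero _, hb₃_ne⟩

/-- For a URTC-norm, in any `d`-probe `(0, b₁, b₂, b₃, c₁, c₂, c₃)` with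
`N b₁ = N b₂ = N (b₁ - b₂) = d`, necessarily `b₃ = b₁ + b₂`; in particular `b₃ ≠ 0`. -/
theorem probe_fourth_point (N : ℝ × ℝ → ℝ) (hN : IsNorm N) (hU : IsURTC N)
    (d : ℝ) (hd : 0 < d) (b₁ b₂ b₃ c₁ c₂ c₃ : ℝ × ℝ)
    (h1 : N b₁ = d) (h2 : N b₂ = d) (h12 : N (b₁ - b₂) = d)
    (hp : IsProbe N d 0 b₁ b₂ b₃ c₁ c₂ c₃) :
    b₃ = b₁ + b₂ ∧ b₃ ≠ 0 :=
  probe_fourth_point_general N hN hU d hd b₁ b₂ b₃ c₁ c₂ c₃ hp
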